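/- Let V be a finite type (the pseudo-labeled nodes), Y an arbitrary type of labels, and E a real normed vector space. Let p and q be probability mass functions on V (the population distribution P_pop and the shifted distribution P_st), let y, ȳ : V → Y be the true and pseudo labels, and let g : V → Y → E satisfy ‖g v c‖ ≤ Ψ for every v ∈ V and c ∈ Y, with Ψ ≥ 0. Let η be a real number with 0 ≤ η ≤ 1 (the fraction |S_U|/|V_L ∪ S_U| of pseudo-labeled nodes) and let C ∈ E be an arbitrary vector (the common labeled-data gradient term). Define G_pop = (1 − η) • C + η • (∑_{v ∈ V} p v • g v (y v)) and G_st = (1 − η) • C + η • (∑_{v ∈ V} q v • g v (ȳ v)). Then ‖G_pop − G_st‖ ≤ η · Ψ · (2 · ∑_{v ∈ V, ȳ v ≠ y v} p v + ∑_{v ∈ V} |p v − q v|). -/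
import Mathlib


/-- Theorem 3: the self-training gradient gap is bounded by `η Ψ` times the sum of
twice the pseudo-label error probability and the ℓ¹ distance between the shifted
and population distributions. -/
theorem self_training_gradient_gap_bound
    (V : Type*) [Fintype V] (Y : Type*) [DecidableEq Y]
    (E : Type*) [NormedAddCommGroup E] [NormedSpace ℝ E]
    (p : V → ℝ) (hp0 : ∀ v, 0 ≤ p v) (hp1 : ∑ v, p v = 1)
    (q : V → ℝ) (hq0 : ∀ v, 0 ≤ q v) (hq1 : ∑ v, q v = 1)
    (y y' : V → Y) (g : V → Y → E)
    (Ψ : ℝ) (hΨ : 0 ≤ Ψ) (hg : ∀ v c, ‖g v c‖ ≤ Ψ)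
    (η : ℝ) (hη0 : 0 ≤ η) (hη1 : η ≤ 1)
    (C : E)
    (Gpop Gst : E)
    (hGpop : Gpop = (1 - η) • C + η • ∑ v, p v • g v (y v))
    (hGst : Gst = (1 - η) • C + η • ∑ v, q v • g v (y' v)) :
    ‖Gpop - Gst‖
      ≤ η * Ψ * (2 * ∑ v ∈ Finset.univ.filter (fun v => y' v ≠ y v), p v
          + ∑ v, |p v - q v|) := by
  subst hGpop hGst
  have key : (((1 - η) • C + η • ∑ v, p v • g v (y v)) -
      ((1 - η) • C + η • ∑ v, q v • g v (y' v)))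
      = η • (∑ v, (p v • (g v (y v) - g v (y' v)) + (p v - q v) • g v (y' v))) := by
    rw [Finset.sum_add_distrib]
    simp [smul_sub, sub_smul, Finset.sum_sub_distrib]
  rw [key]
  rw [norm_smul, Real.norm_eq_abs, abs_of_nonneg hη0, mul_assoc]
  apply mul_le_mul_of_nonneg_left _ hη0
  calc ‖∑ v, (p v • (g v (y v) - g v (y' v)) + (p v - q v) • g v (y' v))‖
      ≤ ∑ v, ‖p v • (g v (y v) - g v (y' v)) + (p v - q v) • g v (y' v)‖ :=
        norm_sum_le _ _
    _ ≤ ∑ v, (‖p v • (g v (y v) - g v (y' v))‖ + ‖(p v - q v) • g v (y' v)‖) := by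
        apply Finset.sum_le_sum; intro v _; exact norm_add_le _ _
    _ ≤ ∑ v, ((if y' v ≠ y v then p v * (2 * Ψ) else 0) + |p v - q v| * Ψ) := by
        apply Finset.sum_le_sum; intro v _
        apply add_le_add
        · rw [norm_smul, Real.norm_eq_abs, abs_of_nonneg (hp0 v)]
          by_cases h : y' v = y v
          · simp [h]
          · simp only [if_pos (by simpa using h : y' v ≠ y v)]
            apply mul_le_mul_of_nonneg_left _ (hp0 v)
            calc ‖g v (y v) - g v (y' v)‖ ≤ ‖g v (y v)‖ + ‖g v (y' v)‖ := norm_sub_le _ _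
              _ ≤ Ψ + Ψ := add_le_add (hg v _) (hg v _)
              _ = 2 * Ψ := by ring
        · rw [norm_smul, Real.norm_eq_abs]
          exact mul_le_mul_of_nonneg_left (hg v _) (abs_nonneg _)
    _ = Ψ * (2 * ∑ v ∈ Finset.univ.filter (fun v => y' v ≠ y v), p v
          + ∑ v, |p v - q v|) := by
        rw [Finset.sum_add_distrib, ← Finset.sum_filter, ← Finset.sum_mul, ← Finset.sum_mul]
        ring
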